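/- arXiv:2104.03744 — 4 statements merged into one kernel-verified Lean document; each statement's English description precedes it below -/
import Mathlib

section
/- Let (X, d) be a locally compact, separable metric space equipped with a σ-finite Borel regular measure 𝔪, and let f ∈ L¹([0,1] × X) with respect to the product of Lebesgue measure on [0,1] and 𝔪. Then for every ε > 0 there exists a Borel set E ⊆ X with 𝔪(X \ E) < ε such that, for every t ∈ [0,1], the function x ↦ ∫₀ᵗ f(r, x) dr, restricted to E, is continuous on E. -/
/-!
Splitting `f = f⁺ - f⁻`, it suffices to treat `f ≥ 0`. Lusin's theorem, applied to the countably
many integrable functions `x ↦ ∫₀^q f(r, x) dr` with `q` rational, gives a set of almost full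
measure on which all of them are continuous and all fibres `f(·, x)` are integrable. There
`t ↦ ∫₀ᵗ f(r, x) dr` is monotone and continuous, so squeezing the primitive at `t` between those at
nearby rationals gives continuity for every `t`.
-/

open MeasureTheory Set
open scoped ENNReal

namespace MeasureTheory

variable {α E : Type*} [TopologicalSpace α] [NormalSpace α] [MeasurableSpace α] [BorelSpace α]
  [NormedAddCommGroup E] [NormedSpace ℝ E] {μ : Measure α} [μ.WeaklyRegular]

theorem Integrable.exists_continuousOn_measure_compl_lt {u : α → E} (hu : Integrable u μ)
    {δ : ℝ≥0∞} (hδ : δ ≠ 0) : ∃ s, MeasurableSet s ∧ μ sᶜ < δ ∧ ContinuousOn u s := by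
  obtain ⟨η, hη0, hηδ⟩ := ENNReal.exists_pos_sum_of_countable hδ ℕ
  have hη0' (n : ℕ) : (η n : ℝ≥0∞) ≠ 0 := ENNReal.coe_ne_zero.2 (hη0 n).ne'
  choose g hg hg_int using fun n => hu.exists_boundedContinuous_lintegral_sub_le
    (mul_ne_zero (hη0' n) (hη0' n))
  -- Markov's inequality at threshold `η n` bounds `μ (B n)` by `η n`; off all `B n`, `g n → u`
  -- uniformly because `η n → 0`.
  set B : ℕ → Set α := fun n => {x | (η n : ℝ≥0∞) ≤ ‖u x - g n x‖ₑ}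
  have hB (n : ℕ) : μ (B n) ≤ η n := by
    have markov := mul_meas_ge_le_lintegral₀
      (hu.sub (hg_int n)).aestronglyMeasurable.enorm (η n : ℝ≥0∞)
    exact (ENNReal.mul_le_mul_iff_right (hη0' n) ENNReal.coe_ne_top).1 (markov.trans (hg n))
  refine ⟨(⋃ n, toMeasurable μ (B n))ᶜ,
    (MeasurableSet.iUnion fun n => measurableSet_toMeasurable _ _).compl, ?_, ?_⟩
  · calc μ (⋃ n, toMeasurable μ (B n))ᶜᶜ ≤ ∑' n, μ (toMeasurable μ (B n)) := by
          rw [compl_compl]; exact measure_iUnion_le _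
      _ ≤ ∑' n, (η n : ℝ≥0∞) :=
          ENNReal.tsum_le_tsum fun n => (measure_toMeasurable _).trans_le (hB n)
      _ < δ := hηδ
  · have hη_lim := ENNReal.tendsto_atTop_zero_of_tsum_ne_top hηδ.ne_top
    have hunif :
        TendstoUniformlyOn (fun n => g n) u Filter.atTop (⋃ n, toMeasurable μ (B n))ᶜ := by
      refine EMetric.tendstoUniformlyOn_iff.2 fun ε hε => ?_
      filter_upwards [(tendsto_order.1 hη_lim).2 ε hε] with n hn x hx
      have hxB : x ∉ B n := fun h => hx (mem_iUnion.2 ⟨n, subset_toMeasurable _ _ h⟩)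
      rw [edist_eq_enorm_sub]
      exact (not_le.1 hxB).trans hn
    exact hunif.continuousOn (Filter.Frequently.of_forall fun n => (g n).continuous.continuousOn)

theorem exists_forall_continuousOn_measure_compl_lt {ι : Type*} [Countable ι] {u : ι → α → E}
    (hu : ∀ i, Integrable (u i) μ) {δ : ℝ≥0∞} (hδ : δ ≠ 0) :
    ∃ s, MeasurableSet s ∧ μ sᶜ < δ ∧ ∀ i, ContinuousOn (u i) s := by
  obtain ⟨η, hη0, hηδ⟩ := ENNReal.exists_pos_sum_of_countable hδ ι
  choose s hs hsη hsu using fun i =>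
    (hu i).exists_continuousOn_measure_compl_lt (ENNReal.coe_ne_zero.2 (hη0 i).ne')
  refine ⟨⋂ i, s i, .iInter hs, ?_, fun i => (hsu i).mono (iInter_subset _ i)⟩
  calc μ (⋂ i, s i)ᶜ ≤ ∑' i, μ (s i)ᶜ := by rw [compl_iInter]; exact measure_iUnion_le _
    _ ≤ ∑' i, (η i : ℝ≥0∞) := ENNReal.tsum_le_tsum fun i => (hsη i).le
    _ < δ := hηδ

end MeasureTheory

theorem continuousOn_of_monotone_of_continuousOn_dense {X β : Type*} [TopologicalSpace X]
    [LinearOrder β] [TopologicalSpace β] [OrderTopology β] {F : ℝ → X → β} {s : Set X}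
    {D : Set ℝ} (hD : Dense D) (hmono : ∀ x ∈ s, Monotone (F · x))
    (hcont : ∀ x ∈ s, Continuous (F · x)) (hD_cont : ∀ d ∈ D, ContinuousOn (F d) s) (t : ℝ) :
    ContinuousOn (F t) s := by
  intro x₀ hx₀
  refine tendsto_order.2 ⟨fun c hc => ?_, fun c hc => ?_⟩
  · obtain ⟨l, u, ⟨hlt, htu⟩, hsub⟩ := mem_nhds_iff_exists_Ioo_subset.1
      (((hcont x₀ hx₀).tendsto t).eventually (lt_mem_nhds hc))
    obtain ⟨d, hdD, hld, hdt⟩ := hD.exists_between hlt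
    have hcd : c < F d x₀ := hsub ⟨hld, hdt.trans htu⟩
    filter_upwards [(hD_cont d hdD x₀ hx₀).eventually (lt_mem_nhds hcd), self_mem_nhdsWithin]
      with x hx hxs
    exact hx.trans_le (hmono x hxs hdt.le)
  · obtain ⟨l, u, ⟨hlt, htu⟩, hsub⟩ := mem_nhds_iff_exists_Ioo_subset.1
      (((hcont x₀ hx₀).tendsto t).eventually (gt_mem_nhds hc))
    obtain ⟨d, hdD, htd, hdu⟩ := hD.exists_between htu
    have hdc : F d x₀ < c := hsub ⟨hlt.trans htd, hdu⟩
    filter_upwards [(hD_cont d hdD x₀ hx₀).eventually (gt_mem_nhds hdc), self_mem_nhdsWithin]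
      with x hx hxs
    exact (hmono x hxs htd.le).trans_lt hx

section Primitive

variable {X : Type*} [MeasurableSpace X] {ν : Measure ℝ} {𝔪 : Measure X}

theorem MeasureTheory.Integrable.intervalIntegral_prod_left [SFinite ν] [SFinite 𝔪]
    {f : ℝ × X → ℝ} (hf : Integrable f (ν.prod 𝔪)) (a b : ℝ) :
    Integrable (fun x => ∫ r in a..b, f (r, x) ∂ν) 𝔪 := by
  have hI (s : Set ℝ) : Integrable (fun x => ∫ r in s, f (r, x) ∂ν) 𝔪 := by
    have h := hf.restrict (s := s ×ˢ univ)
    rw [← Measure.prod_restrict, Measure.restrict_univ] at h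
    exact h.integral_prod_right
  simp only [intervalIntegral]
  exact (hI _).sub (hI _)

theorem intervalIntegral.monotone_primitive_of_nonneg {g : ℝ → ℝ} (hg : Integrable g ν)
    (hg0 : 0 ≤ g) (a : ℝ) : Monotone fun t => ∫ r in a..t, g r ∂ν := by
  intro t t' htt'
  calc ∫ r in a..t, g r ∂ν ≤ (∫ r in a..t, g r ∂ν) + ∫ r in t..t', g r ∂ν :=
        le_add_of_nonneg_right (intervalIntegral.integral_nonneg htt' fun r _ => hg0 r)
    _ = ∫ r in a..t', g r ∂ν :=
        intervalIntegral.integral_add_adjacent_intervals hg.intervalIntegrable hg.intervalIntegrable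

variable [TopologicalSpace X] [NormalSpace X] [BorelSpace X] [NullSingletonClass ν] [SFinite ν]
  [SFinite 𝔪] [𝔪.WeaklyRegular]

theorem exists_continuousOn_primitive_of_nonneg {g : ℝ × X → ℝ} (hg : Integrable g (ν.prod 𝔪))
    (hg0 : 0 ≤ g) {δ : ℝ≥0∞} (hδ : δ ≠ 0) :
    ∃ E, MeasurableSet E ∧ 𝔪 Eᶜ < δ ∧ (∀ x ∈ E, Integrable (fun r => g (r, x)) ν) ∧
      ∀ t, ContinuousOn (fun x => ∫ r in (0 : ℝ)..t, g (r, x) ∂ν) E := by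
  obtain ⟨s, hs, hsδ, hs_cont⟩ := exists_forall_continuousOn_measure_compl_lt
    (fun q : ℚ => hg.intervalIntegral_prod_left 0 q) hδ
  set N := toMeasurable 𝔪 {x | ¬Integrable (fun r => g (r, x)) ν}
  have hN : 𝔪 N = 0 := by rw [measure_toMeasurable]; exact hg.prod_left_ae
  have h_int : ∀ x ∈ s \ N, Integrable (fun r => g (r, x)) ν :=
    fun x hx => not_not.1 fun h => hx.2 (subset_toMeasurable _ _ h)
  refine ⟨s \ N, hs.diff (measurableSet_toMeasurable _ _), ?_, h_int, fun t => ?_⟩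
  · calc 𝔪 (s \ N)ᶜ ≤ 𝔪 N + 𝔪 sᶜ := by rw [compl_sdiff]; exact measure_union_le _ _
      _ < δ := by rwa [hN, zero_add]
  refine continuousOn_of_monotone_of_continuousOn_dense Rat.denseRange_cast
    (fun x hx => intervalIntegral.monotone_primitive_of_nonneg (h_int x hx) (fun _ => hg0 _) 0)
    (fun x hx =>
      intervalIntegral.continuous_primitive (fun _ _ => (h_int x hx).intervalIntegrable) 0)
    ?_ t
  rintro _ ⟨q, rfl⟩
  exact (hs_cont q).mono sdiff_subset

theorem exists_continuousOn_primitive {f : ℝ × X → ℝ} (hf : Integrable f (ν.prod 𝔪))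
    {δ : ℝ≥0∞} (hδ : δ ≠ 0) :
    ∃ E, MeasurableSet E ∧ 𝔪 Eᶜ < δ ∧
      ∀ t, ContinuousOn (fun x => ∫ r in (0 : ℝ)..t, f (r, x) ∂ν) E := by
  obtain ⟨E₁, hE₁, hE₁δ, hE₁_int, hE₁_cont⟩ := exists_continuousOn_primitive_of_nonneg
    hf.pos_part (fun p => le_max_right (f p) 0) (ENNReal.half_pos hδ).ne'
  obtain ⟨E₂, hE₂, hE₂δ, hE₂_int, hE₂_cont⟩ := exists_continuousOn_primitive_of_nonneg
    hf.neg_part (fun p => le_max_right (-f p) 0) (ENNReal.half_pos hδ).ne'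
  refine ⟨E₁ ∩ E₂, hE₁.inter hE₂, ?_, fun t => ?_⟩
  · calc 𝔪 (E₁ ∩ E₂)ᶜ ≤ 𝔪 E₁ᶜ + 𝔪 E₂ᶜ := by rw [compl_inter]; exact measure_union_le _ _
      _ < δ / 2 + δ / 2 := ENNReal.add_lt_add hE₁δ hE₂δ
      _ = δ := ENNReal.add_halves δ
  refine (((hE₁_cont t).mono inter_subset_left).sub ((hE₂_cont t).mono inter_subset_right)).congr
    fun x hx => ?_
  rw [Pi.sub_apply, ← intervalIntegral.integral_sub (hE₁_int x hx.1).intervalIntegrable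
    (hE₂_int x hx.2).intervalIntegrable]
  simp only [max_zero_sub_max_neg_zero_eq_self]

end Primitive

theorem lusin_continuity_of_time_integral_general
    {X : Type*} [MetricSpace X]
    [MeasurableSpace X] [BorelSpace X]
    (𝔪 : Measure X) [SigmaFinite 𝔪] [𝔪.WeaklyRegular]
    (f : ℝ × X → ℝ)
    (hf : Integrable f ((volume.restrict (Icc (0:ℝ) 1)).prod 𝔪)) :
    ∀ ε : ℝ, 0 < ε →
      ∃ E : Set X, MeasurableSet E ∧ 𝔪 Eᶜ < ENNReal.ofReal ε ∧
        ∀ t ∈ Icc (0:ℝ) 1,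
          ContinuousOn (fun x => ∫ r in (0:ℝ)..t, f (r, x)) E := by
  intro ε hε
  have hg : Integrable ((Icc (0 : ℝ) 1 ×ˢ univ).indicator f) (volume.prod 𝔪) := by
    rwa [integrable_indicator_iff (measurableSet_Icc.prod .univ), IntegrableOn,
      ← Measure.prod_restrict, Measure.restrict_univ]
  obtain ⟨E, hE, hEε, hE_cont⟩ := exists_continuousOn_primitive hg (ENNReal.ofReal_pos.2 hε).ne'
  refine ⟨E, hE, hEε, fun t ht => (hE_cont t).congr fun x _ =>
    intervalIntegral.integral_congr fun r hr => ?_⟩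
  rw [uIcc_of_le ht.1] at hr
  exact (indicator_of_mem (mk_mem_prod (Icc_subset_Icc_right ht.2 hr) (mem_univ x)) f).symm

/-- **Lusin-type continuity of time integrals** (Lemma 5.1 of the paper).
Let `(X, d)` be a locally compact, separable metric space equipped with a σ-finite
Borel regular measure `𝔪`, and let `f ∈ L¹([0,1] × X)` (with respect to the product
of Lebesgue measure on `[0,1]` and `𝔪`).  Then for every `ε > 0` there exists a Borel
set `E ⊆ X` with `𝔪(X \ E) < ε` such that, for every `t ∈ [0,1]`, the function
`x ↦ ∫₀ᵗ f(r, x) dr`, restricted to `E`, is continuous on `E`. -/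
theorem lusin_continuity_of_time_integral
    {X : Type*} [MetricSpace X] [LocallyCompactSpace X]
    [TopologicalSpace.SeparableSpace X]
    [MeasurableSpace X] [BorelSpace X]
    (𝔪 : Measure X) [SigmaFinite 𝔪] [𝔪.WeaklyRegular]
    (f : ℝ × X → ℝ)
    (hf : Integrable f ((volume.restrict (Icc (0:ℝ) 1)).prod 𝔪)) :
    ∀ ε : ℝ, 0 < ε →
      ∃ E : Set X, MeasurableSet E ∧ 𝔪 Eᶜ < ENNReal.ofReal ε ∧
        ∀ t ∈ Icc (0:ℝ) 1,
          ContinuousOn (fun x => ∫ r in (0:ℝ)..t, f (r, x)) E :=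
  lusin_continuity_of_time_integral_general 𝔪 f hf
end

section
/- Let (X, d) be a metric space equipped with a uniformly locally doubling Borel measure 𝔪 whose balls have positive and finite measure, let F : X → X be a map and let x ∈ X with 𝔪({x}) = 0. Let E₁, E₂ ⊆ X be measurable sets with x ∈ E₁ ∩ E₂ such that each Eᵢ has density 1 at x, i.e. 𝔪(Eᵢ ∩ B_r(x)) / 𝔪(B_r(x)) → 1 as r → 0, and such that the restriction of F to each Eᵢ is Lipschitz. Then liminf_{y ∈ E₁, y → x} d(F(x), F(y)) / d(x, y) = liminf_{y ∈ E₂, y → x} d(F(x), F(y)) / d(x, y), and limsup_{y ∈ E₁, y → x} d(F(x), F(y)) / d(x, y) = limsup_{y ∈ E₂, y → x} d(F(x), F(y)) / d(x, y). In particular, the lower and upper approximate slopes of F at x are well defined, independently of the chosen density-1 set. -/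
/-!
Put `S = E₁ ∩ E₂`; it suffices to show that the slopes along each `Eᵢ` agree with those along
`S`. Since `Sᶜ` has density zero at `x`, the doubling property forbids a ball `B(y, ε d(x, y))`
missing `S` as `y → x`: such a ball would carry a fixed proportion of `B(x, (1 + ε) d(x, y))`.
So every `y ∈ Eᵢ` near `x` has a point `w ∈ S` with `d(y, w) < ε d(x, y)`, and the Lipschitz
bound on `Eᵢ` makes the difference quotients at `y` and at `w` differ by at most `2 K ε`.
-/

open MeasureTheory Set ENNReal Filter Metric Topology IsUnifLocDoublingMeasure

theorem tendsto_const_mul_dist_nhdsNE {X : Type*} [MetricSpace X] (x : X) {c : ℝ} (hc : 0 < c) :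
    Tendsto (fun y => c * dist x y) (𝓝[≠] x) (𝓝[>] 0) := by
  refine tendsto_nhdsWithin_iff.2 ⟨?_, ?_⟩
  · refine (Continuous.tendsto' ?_ x 0 (by simp)).mono_left nhdsWithin_le_nhds
    fun_prop
  · filter_upwards [self_mem_nhdsWithin] with y (hy : y ≠ x)
    exact mul_pos hc (dist_pos.2 hy.symm)

section Density

variable {X : Type*} [PseudoMetricSpace X] [MeasurableSpace X] {𝔪 : Measure X} {x : X}

def HasDensityZeroAt (𝔪 : Measure X) (s : Set X) (x : X) : Prop :=
  Tendsto (fun r : ℝ => 𝔪 (s ∩ ball x r) / 𝔪 (ball x r)) (𝓝[>] 0) (𝓝 0)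

theorem hasDensityZeroAt_compl {E : Set X} (hE : MeasurableSet E)
    (hpos : ∀ r > 0, 𝔪 (ball x r) ≠ 0) (hfin : ∀ r > 0, 𝔪 (ball x r) ≠ ∞)
    (h : Tendsto (fun r : ℝ => 𝔪 (E ∩ ball x r) / 𝔪 (ball x r)) (𝓝[>] 0) (𝓝 1)) :
    HasDensityZeroAt 𝔪 Eᶜ x := by
  have h₀ : Tendsto (fun r : ℝ => 1 - 𝔪 (E ∩ ball x r) / 𝔪 (ball x r)) (𝓝[>] 0) (𝓝 0) := by
    simpa using ENNReal.Tendsto.sub tendsto_const_nhds h (Or.inl one_ne_top)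
  refine h₀.congr' ?_
  filter_upwards [self_mem_nhdsWithin] with r (hr : 0 < r)
  have hsplit : 𝔪 (ball x r) = 𝔪 (E ∩ ball x r) + 𝔪 (Eᶜ ∩ ball x r) := by
    rw [← measure_inter_add_sdiff (ball x r) hE, inter_comm, sdiff_eq, inter_comm (Eᶜ)]
  have hfin' : 𝔪 (E ∩ ball x r) ≠ ∞ :=
    ne_top_of_le_ne_top (hfin r hr) (measure_mono inter_subset_right)
  rw [← ENNReal.div_self (hpos r hr) (hfin r hr), ← ENNReal.sub_div fun _ _ => hpos r hr,
    ENNReal.sub_eq_of_eq_add_rev hfin' hsplit]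

theorem HasDensityZeroAt.union {s t : Set X} (hs : HasDensityZeroAt 𝔪 s x)
    (ht : HasDensityZeroAt 𝔪 t x) : HasDensityZeroAt 𝔪 (s ∪ t) x := by
  have hsum := hs.add ht
  rw [add_zero] at hsum
  refine tendsto_of_tendsto_of_tendsto_of_le_of_le tendsto_const_nhds hsum (fun _ => zero_le)
    fun r => ?_
  rw [← ENNReal.add_div, union_inter_distrib_right]
  gcongr
  exact measure_union_le _ _

theorem HasDensityZeroAt.eventually_measure_inter_ball_lt {s : Set X}
    (h : HasDensityZeroAt 𝔪 s x) (hpos : ∀ r > 0, 𝔪 (ball x r) ≠ 0)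
    (hfin : ∀ r > 0, 𝔪 (ball x r) ≠ ∞) {c : ℝ≥0∞} (hc : c ≠ 0) :
    ∀ᶠ r in 𝓝[>] (0 : ℝ), 𝔪 (s ∩ ball x r) < c * 𝔪 (ball x r) := by
  filter_upwards [h (Iio_mem_nhds (pos_iff_ne_zero.2 hc)), self_mem_nhdsWithin]
    with r hr (hr₀ : 0 < r)
  exact (ENNReal.div_lt_iff (Or.inl (hpos r hr₀)) (Or.inl (hfin r hr₀))).1 hr

theorem HasDensityZeroAt.nhdsWithin_diff_singleton_neBot {S : Set X}
    (h : HasDensityZeroAt 𝔪 Sᶜ x) (hpos : ∀ r > 0, 𝔪 (ball x r) ≠ 0)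
    (hfin : ∀ r > 0, 𝔪 (ball x r) ≠ ∞) (hx : 𝔪 {x} = 0) : (𝓝[S \ {x}] x).NeBot := by
  rw [← mem_closure_iff_nhdsWithin_neBot, Metric.mem_closure_iff]
  intro r hr
  obtain ⟨s, hs, hs₀, hsr⟩ :=
    ((h.eventually_measure_inter_ball_lt hpos hfin one_ne_zero).and (Ioo_mem_nhdsGT hr)).exists
  have hS : 𝔪 (ball x s ∩ S) ≠ 0 := by
    intro h₀
    have := measure_le_inter_add_sdiff 𝔪 (ball x s) S
    rw [h₀, zero_add, sdiff_eq, inter_comm] at this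
    exact this.not_gt (by simpa using hs)
  rw [← measure_sdiff_null hx] at hS
  obtain ⟨z, ⟨hzx, hzS⟩, hz⟩ := nonempty_of_measure_ne_zero hS
  exact ⟨z, ⟨hzS, hz⟩, (mem_ball'.1 hzx).trans hsr⟩

variable [IsUnifLocDoublingMeasure 𝔪]

theorem measure_ball_le_scalingConstantOf_mul_closedBall {y : X} {R r K : ℝ} (hK : 0 < K)
    (hr : r ≤ scalingScaleOf 𝔪 K) (hR : R + dist x y ≤ K * r) :
    𝔪 (ball x R) ≤ scalingConstantOf 𝔪 K * 𝔪 (closedBall y r) :=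
  calc 𝔪 (ball x R) ≤ 𝔪 (closedBall y (K * r)) := measure_mono fun z hz => by
        rw [mem_ball] at hz
        rw [mem_closedBall]
        linarith [dist_triangle z x y]
    _ ≤ _ := measure_mul_le_scalingConstantOf_mul 𝔪 ⟨hK, le_rfl⟩ hr

end Density

theorem HasDensityZeroAt.eventually_exists_dist_lt {X : Type*} [MetricSpace X]
    [MeasurableSpace X] {𝔪 : Measure X} [IsUnifLocDoublingMeasure 𝔪] {x : X} {S : Set X}
    (h : HasDensityZeroAt 𝔪 Sᶜ x) (hpos : ∀ r > 0, 𝔪 (ball x r) ≠ 0)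
    (hfin : ∀ r > 0, 𝔪 (ball x r) ≠ ∞) {ε : ℝ} (hε : 0 < ε) :
    ∀ᶠ y in 𝓝[≠] x, ∃ w ∈ S, dist y w < ε * dist x y := by
  -- `K` is chosen so that `B(x, (1 + ε) d)` lies in the `K`-fold enlargement of `B̄(y, ε d / 2)`.
  set K := (2 + ε) / (ε / 2)
  set C : ℝ≥0∞ := (scalingConstantOf 𝔪 K : ℝ≥0∞)
  have hC : C ≠ 0 := by
    simpa [C] using (zero_lt_one.trans_le (one_le_scalingConstantOf 𝔪 K)).ne'
  have hdensity := (tendsto_const_mul_dist_nhdsNE x (by positivity : 0 < 1 + ε)).eventually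
    (h.eventually_measure_inter_ball_lt hpos hfin (c := C⁻¹) (ENNReal.inv_ne_zero.2 coe_ne_top))
  have hscale := (tendsto_const_mul_dist_nhdsNE x (half_pos hε)).eventually
    ((eventually_le_nhds (scalingScaleOf_pos 𝔪 K)).filter_mono nhdsWithin_le_nhds)
  filter_upwards [hdensity, hscale, self_mem_nhdsWithin] with y hlt hy (hyx : y ≠ x)
  by_contra! hfar
  set d := dist x y
  have hεd : 0 < ε * d := mul_pos hε (dist_pos.2 hyx.symm)
  have hyx' : dist y x = d := dist_comm y x
  have hsub : closedBall y (ε / 2 * d) ⊆ Sᶜ ∩ ball x ((1 + ε) * d) := by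
    intro z hz
    rw [mem_closedBall] at hz
    refine ⟨fun hzS => ?_, ?_⟩
    · linarith [hfar z hzS, dist_comm y z]
    · rw [mem_ball]
      linarith [dist_triangle z y x]
  have hR : (1 + ε) * d + d ≤ K * (ε / 2 * d) := by
    rw [← mul_assoc, div_mul_cancel₀ _ (by positivity)]
    linarith
  have hle : 𝔪 (ball x ((1 + ε) * d)) ≤ C * 𝔪 (Sᶜ ∩ ball x ((1 + ε) * d)) :=
    (measure_ball_le_scalingConstantOf_mul_closedBall (by positivity) hy hR).trans
      (by gcongr)
  refine (hle.trans_lt ((ENNReal.mul_lt_mul_iff_right hC coe_ne_top).2 hlt)).ne ?_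
  rw [← mul_assoc, ENNReal.mul_inv_cancel hC coe_ne_top, one_mul]

section Limits

variable {α : Type*} {l₁ l₂ : Filter α} [l₁.NeBot] {f : α → ℝ}

theorem liminf_eq_of_le_of_approx (hl : l₁ ≤ l₂) (hbdd : IsBoundedUnder (· ≤ ·) l₂ f)
    (hbdd' : IsBoundedUnder (· ≥ ·) l₂ f)
    (happrox : ∀ η > 0, ∀ U ∈ l₁, ∀ᶠ y in l₂, ∃ w ∈ U, |f y - f w| ≤ η) :
    liminf f l₁ = liminf f l₂ := by
  have := neBot_of_le hl
  refine le_antisymm (_root_.le_of_forall_pos_le_add fun η hη => ?_)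
    (liminf_le_liminf_of_le hl hbdd' (hbdd.mono hl).isCoboundedUnder_ge)
  have hU : ∀ᶠ w in l₁, liminf f l₁ - η / 2 < f w :=
    eventually_lt_of_lt_liminf (by linarith) (hbdd'.mono hl)
  rw [← sub_le_iff_le_add]
  refine le_liminf_of_le hbdd.isCoboundedUnder_ge ?_
  filter_upwards [happrox (η / 2) (half_pos hη) _ hU] with y ⟨w, hw, hyw⟩
  linarith [(abs_sub_le_iff.1 hyw).2]

theorem limsup_eq_of_le_of_approx (hl : l₁ ≤ l₂) (hbdd : IsBoundedUnder (· ≤ ·) l₂ f)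
    (hbdd' : IsBoundedUnder (· ≥ ·) l₂ f)
    (happrox : ∀ η > 0, ∀ U ∈ l₁, ∀ᶠ y in l₂, ∃ w ∈ U, |f y - f w| ≤ η) :
    limsup f l₁ = limsup f l₂ := by
  have := neBot_of_le hl
  refine le_antisymm (limsup_le_limsup_of_le hl (hbdd'.mono hl).isCoboundedUnder_le hbdd)
    (_root_.le_of_forall_pos_le_add fun η hη => ?_)
  have hU : ∀ᶠ w in l₁, f w < limsup f l₁ + η / 2 :=
    eventually_lt_of_limsup_lt (by linarith) (hbdd.mono hl)
  refine limsup_le_of_le hbdd'.isCoboundedUnder_le ?_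
  filter_upwards [happrox (η / 2) (half_pos hη) _ hU] with y ⟨w, hw, hyw⟩
  linarith [(abs_sub_le_iff.1 hyw).1]

end Limits

section DiffQuot

variable {X Y : Type*} [MetricSpace X] [PseudoMetricSpace Y] {F : X → Y} {A : Set X}
  {K : NNReal} {x : X}

noncomputable def diffQuot (F : X → Y) (x y : X) : ℝ := dist (F x) (F y) / dist x y

theorem diffQuot_nonneg (y : X) : 0 ≤ diffQuot F x y :=
  div_nonneg dist_nonneg dist_nonneg

theorem LipschitzOnWith.diffQuot_le (hF : LipschitzOnWith K F A) (hx : x ∈ A) {y : X}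
    (hy : y ∈ A) : diffQuot F x y ≤ K :=
  div_le_of_le_mul₀ dist_nonneg K.2 (hF.dist_le_mul x hx y hy)

theorem LipschitzOnWith.abs_diffQuot_sub_diffQuot_le (hF : LipschitzOnWith K F A)
    {y w : X} (hx : x ∈ A) (hy : y ∈ A) (hw : w ∈ A) (hxy : 0 < dist x y) (hxw : 0 < dist x w)
    {ε : ℝ} (hyw : dist y w ≤ ε * dist x y) :
    |diffQuot F x y - diffQuot F x w| ≤ 2 * K * ε := by
  have hab : |dist (F x) (F y) - dist (F x) (F w)| ≤ K * (ε * dist x y) :=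
    calc |dist (F x) (F y) - dist (F x) (F w)| ≤ dist (F y) (F w) := by
          simpa only [dist_comm (F x)] using abs_dist_sub_le (F y) (F w) (F x)
      _ ≤ K * dist y w := hF.dist_le_mul y hy w hw
      _ ≤ K * (ε * dist x y) := by gcongr
  have hdist : |dist x w - dist x y| ≤ ε * dist x y := by
    have := abs_dist_sub_le w y x
    rw [dist_comm w x, dist_comm y x, dist_comm w y] at this
    exact this.trans hyw
  have hw_le := hF.diffQuot_le hx hw
  unfold diffQuot at hw_le ⊢
  calc |dist (F x) (F y) / dist x y - dist (F x) (F w) / dist x w|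
      = |(dist (F x) (F y) - dist (F x) (F w)) / dist x y
          + dist (F x) (F w) / dist x w * ((dist x w - dist x y) / dist x y)| := by
        congr 1
        field_simp
        ring
    _ ≤ |dist (F x) (F y) - dist (F x) (F w)| / dist x y
          + dist (F x) (F w) / dist x w * (|dist x w - dist x y| / dist x y) := by
        refine (abs_add_le _ _).trans_eq ?_
        simp only [abs_mul, abs_div, abs_dist]
    _ ≤ K * ε + K * ε := by
        gcongr
        · exact (div_le_iff₀ hxy).2 (by linarith)
        · exact (div_le_iff₀ hxy).2 hdist
    _ = 2 * K * ε := by ring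

theorem LipschitzOnWith.eventually_exists_abs_diffQuot_sub_le {S : Set X}
    (hF : LipschitzOnWith K F A) (hSA : S ⊆ A) (hx : x ∈ A)
    (hS : ∀ ε > 0, ∀ᶠ y in 𝓝[≠] x, ∃ w ∈ S, dist y w < ε * dist x y) :
    ∀ η > 0, ∀ U ∈ 𝓝[S \ {x}] x,
      ∀ᶠ y in 𝓝[A \ {x}] x, ∃ w ∈ U, |diffQuot F x y - diffQuot F x w| ≤ η := by
  intro η hη U hU
  obtain ⟨r, hr, hrU⟩ := Metric.mem_nhdsWithin_iff.1 hU
  set ε := min (1 / 2) (η / (2 * K + 1))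
  have hε : 0 < ε := lt_min one_half_pos (by positivity)
  have hεη : 2 * K * ε ≤ η := by
    have := (le_div_iff₀ (by positivity)).1 (min_le_right (1 / 2 : ℝ) (η / (2 * K + 1)))
    nlinarith
  filter_upwards [nhdsWithin_mono x (sdiff_subset_compl A {x}) (hS ε hε), self_mem_nhdsWithin,
    nhdsWithin_le_nhds (ball_mem_nhds x (half_pos hr))] with y ⟨w, hwS, hyw⟩ ⟨hyA, hyx⟩ hyr
  have hxy : 0 < dist x y := dist_pos.2 (Ne.symm hyx)
  have hε_half : ε ≤ 1 / 2 := min_le_left _ _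
  have hyr' : dist x y < r / 2 := by rwa [dist_comm, ← mem_ball]
  have hxw_lo : dist x y - dist y w ≤ dist x w := by linarith [dist_triangle x w y, dist_comm w y]
  have hxw_hi : dist x w ≤ dist x y + dist y w := dist_triangle x y w
  have hyw_half : dist y w < dist x y / 2 := by nlinarith
  have hxw : 0 < dist x w := by linarith
  refine ⟨w, hrU ⟨?_, hwS, ?_⟩, ?_⟩
  · rw [mem_ball, dist_comm]
    linarith
  · exact fun hwx => hxw.ne' (by rw [hwx, dist_self])
  · exact (hF.abs_diffQuot_sub_diffQuot_le hx hyA (hSA hwS) hxy hxw hyw.le).trans hεη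

theorem LipschitzOnWith.liminf_limsup_diffQuot_eq_of_subset {S : Set X}
    [(𝓝[S \ {x}] x).NeBot] (hF : LipschitzOnWith K F A) (hSA : S ⊆ A) (hx : x ∈ A)
    (hS : ∀ ε > 0, ∀ᶠ y in 𝓝[≠] x, ∃ w ∈ S, dist y w < ε * dist x y) :
    liminf (diffQuot F x) (𝓝[A \ {x}] x) = liminf (diffQuot F x) (𝓝[S \ {x}] x)
      ∧ limsup (diffQuot F x) (𝓝[A \ {x}] x) = limsup (diffQuot F x) (𝓝[S \ {x}] x) := by
  have hl : 𝓝[S \ {x}] x ≤ 𝓝[A \ {x}] x := nhdsWithin_mono x (sdiff_subset_sdiff_left hSA)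
  have hbdd : IsBoundedUnder (· ≤ ·) (𝓝[A \ {x}] x) (diffQuot F x) :=
    isBoundedUnder_of_eventually_le
      (eventually_nhdsWithin_of_forall fun y hy => hF.diffQuot_le hx hy.1)
  have hbdd' : IsBoundedUnder (· ≥ ·) (𝓝[A \ {x}] x) (diffQuot F x) :=
    isBoundedUnder_of_eventually_ge (Eventually.of_forall diffQuot_nonneg)
  have happrox := hF.eventually_exists_abs_diffQuot_sub_le hSA hx hS
  exact ⟨(liminf_eq_of_le_of_approx hl hbdd hbdd' happrox).symm,
    (limsup_eq_of_le_of_approx hl hbdd hbdd' happrox).symm⟩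

end DiffQuot

theorem approximate_slopes_well_defined_general
    {X : Type*} [MetricSpace X] [MeasurableSpace X]
    (𝔪 : Measure X) [IsUnifLocDoublingMeasure 𝔪]
    (hballs : ∀ (z : X) (r : ℝ), 0 < r → 0 < 𝔪 (ball z r) ∧ 𝔪 (ball z r) < ⊤)
    (F : X → X) (x : X) (hx : 𝔪 {x} = 0)
    (E₁ E₂ : Set X) (hE₁ : MeasurableSet E₁) (hE₂ : MeasurableSet E₂)
    (hx₁ : x ∈ E₁) (hx₂ : x ∈ E₂)
    (hd₁ : Tendsto (fun r : ℝ => 𝔪 (E₁ ∩ ball x r) / 𝔪 (ball x r))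
      (nhdsWithin 0 (Ioi 0)) (nhds 1))
    (hd₂ : Tendsto (fun r : ℝ => 𝔪 (E₂ ∩ ball x r) / 𝔪 (ball x r))
      (nhdsWithin 0 (Ioi 0)) (nhds 1))
    (hL₁ : ∃ K : NNReal, LipschitzOnWith K F E₁)
    (hL₂ : ∃ K : NNReal, LipschitzOnWith K F E₂) :
    liminf (fun y => dist (F x) (F y) / dist x y) (nhdsWithin x (E₁ \ {x}))
        = liminf (fun y => dist (F x) (F y) / dist x y) (nhdsWithin x (E₂ \ {x}))
      ∧ limsup (fun y => dist (F x) (F y) / dist x y) (nhdsWithin x (E₁ \ {x}))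
        = limsup (fun y => dist (F x) (F y) / dist x y) (nhdsWithin x (E₂ \ {x})) := by
  obtain ⟨K₁, hK₁⟩ := hL₁
  obtain ⟨K₂, hK₂⟩ := hL₂
  have hpos : ∀ r > 0, 𝔪 (ball x r) ≠ 0 := fun r hr => (hballs x r hr).1.ne'
  have hfin : ∀ r > 0, 𝔪 (ball x r) ≠ ∞ := fun r hr => (hballs x r hr).2.ne
  have hS : HasDensityZeroAt 𝔪 (E₁ ∩ E₂)ᶜ x := by
    rw [compl_inter]
    exact (hasDensityZeroAt_compl hE₁ hpos hfin hd₁).union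
      (hasDensityZeroAt_compl hE₂ hpos hfin hd₂)
  have := hS.nhdsWithin_diff_singleton_neBot hpos hfin hx
  have happrox := fun ε (hε : 0 < ε) => hS.eventually_exists_dist_lt hpos hfin hε
  obtain ⟨h₁, h₁'⟩ := hK₁.liminf_limsup_diffQuot_eq_of_subset inter_subset_left hx₁ happrox
  obtain ⟨h₂, h₂'⟩ := hK₂.liminf_limsup_diffQuot_eq_of_subset inter_subset_right hx₂ happrox
  exact ⟨h₁.trans h₂.symm, h₁'.trans h₂'.symm⟩

/-- **Well-posedness of the approximate slopes** (Remark 1.4 of the paper).  Let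
`(X, d)` be a metric space equipped with a uniformly locally doubling Borel measure
`𝔪` whose balls have positive and finite measure, let `F : X → X` and `x ∈ X` with
`𝔪({x}) = 0`.  If `E₁, E₂` are measurable sets containing `x`, of density `1` at
`x`, on which `F` is Lipschitz, then the liminf and limsup of
`d(F(x), F(y)) / d(x, y)` as `y → x` within `E₁ \ {x}` coincide with the respective
ones within `E₂ \ {x}`: the lower and upper approximate slopes of `F` at `x` do not
depend on the chosen density-1 set. -/
theorem approximate_slopes_well_defined
    {X : Type*} [MetricSpace X] [MeasurableSpace X] [BorelSpace X]
    (𝔪 : Measure X) [IsUnifLocDoublingMeasure 𝔪]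
    (hballs : ∀ (z : X) (r : ℝ), 0 < r → 0 < 𝔪 (ball z r) ∧ 𝔪 (ball z r) < ⊤)
    (F : X → X) (x : X) (hx : 𝔪 {x} = 0)
    (E₁ E₂ : Set X) (hE₁ : MeasurableSet E₁) (hE₂ : MeasurableSet E₂)
    (hx₁ : x ∈ E₁) (hx₂ : x ∈ E₂)
    (hd₁ : Tendsto (fun r : ℝ => 𝔪 (E₁ ∩ ball x r) / 𝔪 (ball x r))
      (nhdsWithin 0 (Ioi 0)) (nhds 1))
    (hd₂ : Tendsto (fun r : ℝ => 𝔪 (E₂ ∩ ball x r) / 𝔪 (ball x r))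
      (nhdsWithin 0 (Ioi 0)) (nhds 1))
    (hL₁ : ∃ K : NNReal, LipschitzOnWith K F E₁)
    (hL₂ : ∃ K : NNReal, LipschitzOnWith K F E₂) :
    liminf (fun y => dist (F x) (F y) / dist x y) (nhdsWithin x (E₁ \ {x}))
        = liminf (fun y => dist (F x) (F y) / dist x y) (nhdsWithin x (E₂ \ {x}))
      ∧ limsup (fun y => dist (F x) (F y) / dist x y) (nhdsWithin x (E₁ \ {x}))
        = limsup (fun y => dist (F x) (F y) / dist x y) (nhdsWithin x (E₂ \ {x})) :=
  approximate_slopes_well_defined_general 𝔪 hballs F x hx E₁ E₂ hE₁ hE₂ hx₁ hx₂ hd₁ hd₂ hL₁ hL₂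
end

section
/- Let (X, d) be a metric space with a Borel measure 𝔪, let A ⊆ X be a nonempty closed set and set u(z) := dist(z, A). Fix T > 0, L ≥ 1, p ∈ (1, ∞), and write p′ := p/(p−1). Let Φ : [0, T] × X → X be jointly measurable with Φ₀ = id and (Φ_t)_# 𝔪 ≤ L 𝔪 for every t ∈ [0, T], and let β : [0, T] × X → [0, ∞] be measurable with ∫₀ᵀ ‖β_t‖_{L^p(𝔪)} dt < ∞. Assume that for 𝔪-a.e. x ∈ X the function t ↦ u(Φ_t(x)) is absolutely continuous on [0, T] with |d/dt u(Φ_t(x))| ≤ β_t(Φ_t(x)) for a.e. t ∈ [0, T]. Let B ⊆ X be a Borel set and r₀ > 0 be such that ∫_{B ∩ {u ≤ r₀}} u^{−p′} d𝔪 < ∞. Then for 𝔪-a.e. x ∈ X satisfying u(x) ≥ r₀ and Φ_t(x) ∈ B for every t ∈ [0, T], one has inf_{t ∈ [0, T]} u(Φ_t(x)) > 0; in particular Φ_t(x) ∉ A for every t ∈ [0, T]. -/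
/-!
Write `u_x(t) = dist(Φ_t x, A)` and `S = B ∩ {u ≤ r₀}`. By Hölder's inequality in space and the
compressibility bound, `x ↦ ∫₀ᵀ β_t(Φ_t x) 𝟙_S(Φ_t x) / u(Φ_t x) dt` is integrable over each
`Φ_q⁻¹(S)`, hence finite for a.e. trajectory that visits `S`. If a trajectory starting at
distance `≥ r₀` reached `A`, then `u_x` would cross every dyadic band `(r₀/2ⁿ⁺¹, r₀/2ⁿ)` on
pairwise disjoint time intervals, each crossing costing `∫ |u_x'| / u_x ≥ 1/2`; since
`|u_x'| ≤ β_t(Φ_t x)`, the integral above would be infinite.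
-/

open MeasureTheory Set ENNReal Metric Function

theorem ContinuousOn.exists_Ioo_crossing {f : ℝ → ℝ} {a τ σ ρ : ℝ} (hf : ContinuousOn f (Icc a τ))
    (haτ : a ≤ τ) (ha : ρ ≤ f a) (hτ : f τ ≤ σ) (hσρ : σ < ρ) :
    ∃ b c, a ≤ b ∧ b < c ∧ c ≤ τ ∧ ρ ≤ f b ∧ f c ≤ σ ∧ ∀ t ∈ Ioo b c, f t ∈ Ioo σ ρ := by
  set C := Icc a τ ∩ f ⁻¹' Iic σ
  have hC : IsClosed C := hf.preimage_isClosed_of_isClosed isClosed_Icc isClosed_Iic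
  have hCb : BddBelow C := ⟨a, fun t ht => ht.1.1⟩
  obtain ⟨⟨hac, hcτ⟩, hfc⟩ : sInf C ∈ C := hC.csInf_mem ⟨τ, ⟨haτ, le_rfl⟩, hτ⟩ hCb
  set c := sInf C
  set B := Icc a c ∩ f ⁻¹' Ici ρ
  have hB : IsClosed B :=
    (hf.mono (Icc_subset_Icc_right hcτ)).preimage_isClosed_of_isClosed isClosed_Icc isClosed_Ici
  have hBb : BddAbove B := ⟨c, fun t ht => ht.1.2⟩
  obtain ⟨⟨hab, hbc⟩, hfb⟩ : sSup B ∈ B := hB.csSup_mem ⟨a, ⟨le_rfl, hac⟩, ha⟩ hBb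
  set b := sSup B
  have hbc' : b < c := hbc.lt_of_ne fun h => (hσρ.trans_le (h ▸ hfb)).not_ge hfc
  refine ⟨b, c, hab, hbc', hcτ, hfb, hfc, fun t ⟨hbt, htc⟩ => ⟨?_, ?_⟩⟩
  · by_contra! h
    exact notMem_of_lt_csInf htc hCb ⟨⟨hab.trans hbt.le, htc.le.trans hcτ⟩, h⟩
  · by_contra! h
    exact notMem_of_csSup_lt hbt hBb ⟨⟨hab.trans hbt.le, htc.le⟩, h⟩

section Primitive

variable {f v : ℝ → ℝ} {f₀ T : ℝ}

theorem continuousOn_of_eq_add_integral (hv : IntervalIntegrable v volume 0 T)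
    (hf : ∀ t ∈ Icc 0 T, f t = f₀ + ∫ s in 0..t, v s) : ContinuousOn f (Icc 0 T) :=
  ((continuousOn_const.add (intervalIntegral.continuousOn_primitive_interval' hv
    left_mem_uIcc)).mono Icc_subset_uIcc).congr hf

theorem sub_eq_integral_of_eq_add_integral (hv : IntervalIntegrable v volume 0 T)
    (hf : ∀ t ∈ Icc 0 T, f t = f₀ + ∫ s in 0..t, v s) {b c : ℝ} (hb : b ∈ Icc 0 T)
    (hc : c ∈ Icc 0 T) : f c - f b = ∫ t in b..c, v t := by
  have hsub : ∀ {t}, t ∈ Icc 0 T → IntervalIntegrable v volume 0 t := fun ht =>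
    hv.mono_set (uIcc_subset_uIcc left_mem_uIcc (Icc_subset_uIcc ht))
  rw [hf c hc, hf b hb, ← intervalIntegral.integral_interval_sub_left (hsub hc) (hsub hb)]
  ring

theorem ofReal_sub_le_lintegral_abs {b c : ℝ} (hbc : b ≤ c) (hv : IntervalIntegrable v volume b c)
    (hf : f c - f b = ∫ t in b..c, v t) :
    ENNReal.ofReal (f b - f c) ≤ ∫⁻ t in Ioo b c, ENNReal.ofReal |v t| := by
  have hvar : f b - f c ≤ ∫ t in b..c, |v t| := by
    rw [← neg_sub, hf]
    exact (neg_le_abs _).trans (intervalIntegral.abs_integral_le_integral_abs hbc)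
  rw [intervalIntegral.integral_of_le hbc, integral_Ioc_eq_integral_Ioo] at hvar
  rw [← ofReal_integral_eq_lintegral_ofReal (hv.1.mono_set Ioo_subset_Ioc_self).abs
    (Filter.Eventually.of_forall fun _ => abs_nonneg _)]
  exact ENNReal.ofReal_le_ofReal hvar

theorem inv_two_le_lintegral_abs_div {b c ρ : ℝ} (hρ : 0 < ρ) (hbc : b ≤ c)
    (hv : IntervalIntegrable v volume b c) (hf : f c - f b = ∫ t in b..c, v t)
    (hb : ρ ≤ f b) (hc : f c ≤ ρ / 2) (hle : ∀ t ∈ Ioo b c, f t ≤ ρ) :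
    2⁻¹ ≤ ∫⁻ t in Ioo b c, ENNReal.ofReal |v t| * (ENNReal.ofReal (f t))⁻¹ := by
  have hρ₀ : ENNReal.ofReal ρ ≠ 0 := (ENNReal.ofReal_pos.2 hρ).ne'
  calc (2⁻¹ : ℝ≥0∞) = (ENNReal.ofReal ρ)⁻¹ * ENNReal.ofReal (ρ / 2) := by
        rw [ENNReal.ofReal_div_of_pos two_pos, ENNReal.ofReal_ofNat, div_eq_mul_inv,
          ENNReal.inv_mul_cancel_left hρ₀ ENNReal.ofReal_ne_top]
    _ ≤ (ENNReal.ofReal ρ)⁻¹ * ∫⁻ t in Ioo b c, ENNReal.ofReal |v t| := by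
        gcongr
        exact (ENNReal.ofReal_le_ofReal (by linarith)).trans (ofReal_sub_le_lintegral_abs hbc hv hf)
    _ = ∫⁻ t in Ioo b c, ENNReal.ofReal |v t| * (ENNReal.ofReal ρ)⁻¹ := by
        rw [lintegral_mul_const' _ _ (ENNReal.inv_ne_top.2 hρ₀), mul_comm]
    _ ≤ _ := setLIntegral_mono' measurableSet_Ioo fun t ht => by
        gcongr
        exact hle t ht

theorem exists_crossing_of_nonpos (hv : IntervalIntegrable v volume 0 T)
    (hf : ∀ t ∈ Icc 0 T, f t = f₀ + ∫ s in 0..t, v s) {τ : ℝ} (hτ : τ ∈ Icc 0 T)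
    (hfτ : f τ ≤ 0) {σ ρ : ℝ} (hσ : 0 ≤ σ) (hσρ : σ < ρ) (hρ : ρ ≤ f₀) :
    ∃ b c, 0 ≤ b ∧ b < c ∧ c ≤ T ∧ ρ ≤ f b ∧ f c ≤ σ ∧ ∀ t ∈ Ioo b c, f t ∈ Ioo σ ρ := by
  have hf0 : f 0 = f₀ := by simpa using hf 0 ⟨le_rfl, hτ.1.trans hτ.2⟩
  obtain ⟨b, c, hb, hbc, hcτ, hfb, hfc, hband⟩ :=
    ((continuousOn_of_eq_add_integral hv hf).mono (Icc_subset_Icc_right hτ.2)).exists_Ioo_crossing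
      hτ.1 (hf0 ▸ hρ) (hfτ.trans hσ) hσρ
  exact ⟨b, c, hb, hbc, hcτ.trans hτ.2, hfb, hfc, hband⟩

theorem exists_rat_lt_of_nonpos (hv : IntervalIntegrable v volume 0 T)
    (hf : ∀ t ∈ Icc 0 T, f t = f₀ + ∫ s in 0..t, v s) {r₀ : ℝ} (hr₀ : 0 < r₀) (h₀ : r₀ ≤ f₀)
    {τ : ℝ} (hτ : τ ∈ Icc 0 T) (hfτ : f τ ≤ 0) : ∃ q : ℚ, (q : ℝ) ∈ Icc 0 T ∧ f q < r₀ := by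
  obtain ⟨b, c, hb, hbc, hc, -, -, hband⟩ :=
    exists_crossing_of_nonpos hv hf hτ hfτ le_rfl hr₀ h₀
  obtain ⟨q, hbq, hqc⟩ := exists_rat_btwn hbc
  exact ⟨q, ⟨hb.trans hbq.le, hqc.le.trans hc⟩, (hband q ⟨hbq, hqc⟩).2⟩

theorem lintegral_abs_div_eq_top_of_nonpos (hv : IntervalIntegrable v volume 0 T)
    (hf : ∀ t ∈ Icc 0 T, f t = f₀ + ∫ s in 0..t, v s) {r₀ : ℝ} (hr₀ : 0 < r₀) (h₀ : r₀ ≤ f₀)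
    {τ : ℝ} (hτ : τ ∈ Icc 0 T) (hfτ : f τ ≤ 0) :
    ∫⁻ t in Icc 0 T ∩ {t | f t ≤ r₀}, ENNReal.ofReal |v t| * (ENNReal.ofReal (f t))⁻¹ = ⊤ := by
  set ρ : ℕ → ℝ := fun n => r₀ / 2 ^ n
  have hρ_pos : ∀ n, 0 < ρ n := fun n => by positivity
  have hρ_succ : ∀ n, ρ (n + 1) = ρ n / 2 := fun n => by simp only [ρ, pow_succ, div_div]
  have hρ_anti : Antitone ρ := fun m n hmn =>
    div_le_div_of_nonneg_left hr₀.le (by positivity) (pow_le_pow_right₀ one_le_two hmn)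
  choose b c hb hbc hc hfb hfc hband using fun n =>
    exists_crossing_of_nonpos hv hf hτ hfτ (hρ_pos (n + 1)).le (hρ_succ n ▸ half_lt_self (hρ_pos n))
      ((hρ_anti (Nat.zero_le n)).trans (by simpa [ρ] using h₀))
  have hsub : ∀ n, Ioo (b n) (c n) ⊆ Icc 0 T ∩ {t | f t ≤ r₀} := fun n t ht =>
    ⟨⟨(hb n).trans ht.1.le, ht.2.le.trans (hc n)⟩,
      (hband n t ht).2.le.trans ((hρ_anti (Nat.zero_le n)).trans (by simp [ρ]))⟩
  have hbands : Pairwise (Disjoint on fun n => Ioo (ρ (n + 1)) (ρ n)) := by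
    have := hρ_anti.dual_right.pairwise_disjoint_on_Ioo_succ
    simp only [Order.succ_eq_add_one, comp_apply, Set.Ioo_toDual] at this
    exact this
  have hdisj : Pairwise (Disjoint on fun n => Ioo (b n) (c n)) := fun m n hmn =>
    (hbands hmn).preimage f |>.mono (fun t ht => hband m t ht) fun t ht => hband n t ht
  have hbound : ∀ n, (2⁻¹ : ℝ≥0∞) ≤
      ∫⁻ t in Ioo (b n) (c n), ENNReal.ofReal |v t| * (ENNReal.ofReal (f t))⁻¹ := fun n =>
    inv_two_le_lintegral_abs_div (hρ_pos n) (hbc n).le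
      (hv.mono_set (uIcc_subset_uIcc (Icc_subset_uIcc ⟨hb n, (hbc n).le.trans (hc n)⟩)
        (Icc_subset_uIcc ⟨(hb n).trans (hbc n).le, hc n⟩)))
      (sub_eq_integral_of_eq_add_integral hv hf ⟨hb n, (hbc n).le.trans (hc n)⟩
        ⟨(hb n).trans (hbc n).le, hc n⟩)
      (hfb n) (hρ_succ n ▸ hfc n) fun t ht => (hband n t ht).2.le
  refine top_le_iff.1 ?_
  calc ⊤ = ∑' _ : ℕ, (2⁻¹ : ℝ≥0∞) := (ENNReal.tsum_const_eq_top_of_ne_zero (by simp)).symm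
    _ ≤ ∑' n, ∫⁻ t in Ioo (b n) (c n), ENNReal.ofReal |v t| * (ENNReal.ofReal (f t))⁻¹ :=
        ENNReal.tsum_le_tsum hbound
    _ = ∫⁻ t in ⋃ n, Ioo (b n) (c n), ENNReal.ofReal |v t| * (ENNReal.ofReal (f t))⁻¹ :=
        (lintegral_iUnion (fun _ => measurableSet_Ioo) hdisj _).symm
    _ ≤ _ := lintegral_mono_set (iUnion_subset hsub)

theorem exists_pos_forall_le_of_eq_add_integral (hv : IntervalIntegrable v volume 0 T)
    (hf : ∀ t ∈ Icc 0 T, f t = f₀ + ∫ s in 0..t, v s) {r₀ : ℝ} (hr₀ : 0 < r₀) (h₀ : r₀ ≤ f₀)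
    (hint : ∀ q : ℚ, (q : ℝ) ∈ Icc 0 T → f q ≤ r₀ →
      ∫⁻ t in Icc 0 T ∩ {t | f t ≤ r₀}, ENNReal.ofReal |v t| * (ENNReal.ofReal (f t))⁻¹ ≠ ⊤) :
    ∃ c, 0 < c ∧ ∀ t ∈ Icc 0 T, c ≤ f t :=
  isCompact_Icc.exists_forall_le' (continuousOn_of_eq_add_integral hv hf) fun τ hτ => by
    by_contra! hfτ
    obtain ⟨q, hq, hfq⟩ := exists_rat_lt_of_nonpos hv hf hr₀ h₀ hτ hfτ
    exact hint q hq hfq.le (lintegral_abs_div_eq_top_of_nonpos hv hf hr₀ h₀ hτ hfτ)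

end Primitive

section Flow

variable {X Y : Type*} [MeasurableSpace X] [MeasurableSpace Y]

theorem measure_ne_top_of_setLIntegral_inv_rpow_ne_top {μ : Measure X} {u : X → ℝ} {s : Set X}
    (hs : MeasurableSet s) {r q : ℝ} (hr : 0 < r) (hq : 0 < q) (hsu : ∀ x ∈ s, u x ≤ r)
    (hfin : ∫⁻ x in s, (ENNReal.ofReal (u x))⁻¹ ^ q ∂μ ≠ ⊤) : μ s ≠ ⊤ := by
  have hc : (ENNReal.ofReal r)⁻¹ ^ q ≠ 0 :=
    (rpow_pos (ENNReal.inv_pos.2 ofReal_ne_top) (ENNReal.inv_ne_top.2 (ofReal_pos.2 hr).ne')).ne'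
  have hle : (ENNReal.ofReal r)⁻¹ ^ q * μ s ≤ ∫⁻ x in s, (ENNReal.ofReal (u x))⁻¹ ^ q ∂μ :=
    setLIntegral_const s _ ▸ setLIntegral_mono' hs fun x hx =>
      rpow_le_rpow (ENNReal.inv_le_inv.2 (ofReal_le_ofReal (hsu x hx))) hq.le
  exact (lt_top_of_mul_ne_top_right (ne_top_of_le_ne_top hfin hle) hc).ne

theorem setLIntegral_lintegral_mul_lt_top {ν : Measure Y} {p q : ℝ} (hpq : p.HolderConjugate q)
    {β : ℝ → Y → ℝ≥0∞} (hβ : ∀ t, AEMeasurable (β t) ν)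
    {H : Y → ℝ≥0∞} (hH : AEMeasurable H ν) (hHq : ∫⁻ y, H y ^ q ∂ν ≠ ⊤) {I : Set ℝ}
    (hβI : ∫⁻ t in I, (∫⁻ y, β t y ^ p ∂ν) ^ (1 / p) < ⊤) :
    ∫⁻ t in I, ∫⁻ y, β t y * H y ∂ν < ⊤ :=
  calc ∫⁻ t in I, ∫⁻ y, β t y * H y ∂ν
      ≤ ∫⁻ t in I, (∫⁻ y, β t y ^ p ∂ν) ^ (1 / p) * (∫⁻ y, H y ^ q ∂ν) ^ (1 / q) :=
        lintegral_mono fun t => ENNReal.lintegral_mul_le_Lp_mul_Lq ν hpq (hβ t) hH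
    _ = (∫⁻ t in I, (∫⁻ y, β t y ^ p ∂ν) ^ (1 / p)) * (∫⁻ y, H y ^ q ∂ν) ^ (1 / q) :=
        lintegral_mul_const' _ _ (rpow_ne_top_of_nonneg (one_div_nonneg.2 hpq.symm.nonneg) hHq)
    _ < ⊤ := mul_lt_top hβI (rpow_lt_top_of_nonneg (one_div_nonneg.2 hpq.symm.nonneg) hHq)

theorem lintegral_comp_le_of_preimage_le {μ : Measure X} {ν : Measure Y} {Φ : X → Y}
    (hΦ : Measurable Φ) {L : ℝ≥0∞} (hpush : ∀ S, MeasurableSet S → μ (Φ ⁻¹' S) ≤ L * ν S)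
    {g : Y → ℝ≥0∞} (hg : Measurable g) : ∫⁻ x, g (Φ x) ∂μ ≤ L * ∫⁻ y, g y ∂ν := by
  have hmap : μ.map Φ ≤ L • ν := Measure.le_iff.2 fun S hS => by
    rw [Measure.map_apply hΦ hS, Measure.smul_apply, smul_eq_mul]
    exact hpush S hS
  calc ∫⁻ x, g (Φ x) ∂μ = ∫⁻ y, g y ∂μ.map Φ := (lintegral_map hg hΦ).symm
    _ ≤ ∫⁻ y, g y ∂(L • ν) := lintegral_mono' hmap le_rfl
    _ = L * ∫⁻ y, g y ∂ν := lintegral_smul_measure _ _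

theorem ae_lintegral_comp_lt_top (μ : Measure X) [SFinite μ] {ν : Measure Y} {Φ : ℝ → X → Y}
    (hΦ : Measurable (uncurry Φ)) {I : Set ℝ} (hI : MeasurableSet I) {L : ℝ≥0∞} (hL : L ≠ ⊤)
    (hpush : ∀ t ∈ I, ∀ S, MeasurableSet S → μ (Φ t ⁻¹' S) ≤ L * ν S)
    {g : ℝ → Y → ℝ≥0∞} (hg : Measurable (uncurry g)) (hgI : ∫⁻ t in I, ∫⁻ y, g t y ∂ν < ⊤) :
    ∀ᵐ x ∂μ, ∫⁻ t in I, g t (Φ t x) < ⊤ := by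
  have hF : Measurable fun p : X × ℝ => g p.2 (Φ p.2 p.1) :=
    hg.comp (measurable_snd.prodMk (hΦ.comp measurable_swap))
  refine ae_lt_top hF.lintegral_prod_right' (ne_top_of_le_ne_top (mul_lt_top hL.lt_top hgI).ne ?_)
  calc ∫⁻ x, (∫⁻ t in I, g t (Φ t x)) ∂μ = ∫⁻ t in I, ∫⁻ x, g t (Φ t x) ∂μ :=
        lintegral_lintegral_swap hF.aemeasurable
    _ ≤ ∫⁻ t in I, L * ∫⁻ y, g t y ∂ν := setLIntegral_mono' hI fun t ht =>
        lintegral_comp_le_of_preimage_le hΦ.of_uncurry_left (hpush t ht) hg.of_uncurry_left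
    _ = L * ∫⁻ t in I, ∫⁻ y, g t y ∂ν := lintegral_const_mul' _ _ hL

/-- Tonelli is not available for the possibly non-s-finite `μ`, so it is applied to the finite
pieces `μ.restrict (Φ q ⁻¹' S)`; countably many times `q` suffice. -/
theorem ae_forall_rat_lintegral_comp_lt_top (μ : Measure X) {ν : Measure Y} {Φ : ℝ → X → Y}
    (hΦ : Measurable (uncurry Φ)) {I : Set ℝ} (hI : MeasurableSet I) {L : ℝ≥0∞} (hL : L ≠ ⊤)
    (hpush : ∀ t ∈ I, ∀ S, MeasurableSet S → μ (Φ t ⁻¹' S) ≤ L * ν S)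
    {g : ℝ → Y → ℝ≥0∞} (hg : Measurable (uncurry g)) (hgI : ∫⁻ t in I, ∫⁻ y, g t y ∂ν < ⊤)
    {S : Set Y} (hS : MeasurableSet S) (hSν : ν S ≠ ⊤) :
    ∀ᵐ x ∂μ, ∀ q : ℚ, (q : ℝ) ∈ I → Φ q x ∈ S → ∫⁻ t in I, g t (Φ t x) < ⊤ := by
  refine ae_all_iff.2 fun q => ?_
  by_cases hq : (q : ℝ) ∈ I
  · have hP : MeasurableSet (Φ q ⁻¹' S) := hΦ.of_uncurry_left hS
    have : IsFiniteMeasure (μ.restrict (Φ q ⁻¹' S)) := isFiniteMeasure_restrict.2 <|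
      ne_top_of_le_ne_top (mul_ne_top hL hSν) (hpush q hq S hS)
    have hfin := ae_lintegral_comp_lt_top (μ.restrict (Φ q ⁻¹' S)) hΦ hI hL
      (fun t ht S' hS' => (Measure.restrict_apply_le _ _).trans (hpush t ht S' hS')) hg hgI
    filter_upwards [(ae_restrict_iff' hP).1 hfin] with x hx _ hxS using hx hxS
  · exact Filter.Eventually.of_forall fun x h => absurd h hq

end Flow

section InfDist

variable {X : Type*} [PseudoMetricSpace X] [MeasurableSpace X]

noncomputable def invInfDistOn (A S : Set X) : X → ℝ≥0∞ :=
  S.indicator fun z => (ENNReal.ofReal (infDist z A))⁻¹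

theorem measurable_invInfDistOn [OpensMeasurableSpace X] {A S : Set X} (hS : MeasurableSet S) :
    Measurable (invInfDistOn A S) :=
  measurable_infDist.ennreal_ofReal.inv.indicator hS

theorem lintegral_invInfDistOn_rpow (μ : Measure X) {A S : Set X} (hS : MeasurableSet S) {q : ℝ}
    (hq : 0 < q) :
    ∫⁻ z, invInfDistOn A S z ^ q ∂μ = ∫⁻ z in S, (ENNReal.ofReal (infDist z A))⁻¹ ^ q ∂μ := by
  rw [← lintegral_indicator hS]
  exact congrArg _ (indicator_comp_of_zero (g := (· ^ q)) (zero_rpow_of_pos hq)).symm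

theorem exists_pos_forall_le_infDist [OpensMeasurableSpace X] {A B : Set X} {γ : ℝ → X}
    (hγ : Measurable γ) {T f₀ r₀ : ℝ} (hγB : ∀ t ∈ Icc 0 T, γ t ∈ B) (hr₀ : 0 < r₀)
    (h₀ : r₀ ≤ f₀) {v : ℝ → ℝ} (hv : IntervalIntegrable v volume 0 T)
    (hf : ∀ t ∈ Icc 0 T, infDist (γ t) A = f₀ + ∫ s in 0..t, v s) {w : ℝ → ℝ≥0∞}
    (hvw : ∀ᵐ t ∂volume.restrict (Icc 0 T), ENNReal.ofReal |v t| ≤ w t)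
    (hfin : ∀ q : ℚ, (q : ℝ) ∈ Icc 0 T → γ q ∈ B ∩ {z | infDist z A ≤ r₀} →
      ∫⁻ t in Icc 0 T, w t * invInfDistOn A (B ∩ {z | infDist z A ≤ r₀}) (γ t) < ⊤) :
    ∃ c, 0 < c ∧ ∀ t ∈ Icc 0 T, c ≤ infDist (γ t) A := by
  set J := Icc 0 T ∩ {t | infDist (γ t) A ≤ r₀}
  have hJ : MeasurableSet J :=
    measurableSet_Icc.inter (measurableSet_le (measurable_infDist.comp hγ) measurable_const)
  have hle : ∫⁻ t in J, ENNReal.ofReal |v t| * (ENNReal.ofReal (infDist (γ t) A))⁻¹ ≤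
      ∫⁻ t in Icc 0 T, w t * invInfDistOn A (B ∩ {z | infDist z A ≤ r₀}) (γ t) := by
    refine (lintegral_mono_ae ?_).trans (lintegral_mono_set inter_subset_left)
    filter_upwards [ae_restrict_mem hJ, ae_restrict_of_ae_restrict_of_subset inter_subset_left hvw]
      with t ht hvt
    have hmem : γ t ∈ B ∩ {z | infDist z A ≤ r₀} := ⟨hγB t ht.1, ht.2⟩
    rw [invInfDistOn, indicator_of_mem hmem]
    exact mul_le_mul_left hvt _
  exact exists_pos_forall_le_of_eq_add_integral hv hf hr₀ h₀ fun q hq hqr =>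
    ne_top_of_le_ne_top (hfin q hq ⟨hγB q hq, hqr⟩).ne hle

end InfDist

theorem flow_avoids_thin_closed_set_general
    {X : Type*} [MetricSpace X] [MeasurableSpace X] [BorelSpace X]
    (𝔪 : Measure X)
    (A : Set X)
    (T L p : ℝ) (hp : 1 < p)
    (Φ : ℝ → X → X) (hΦm : Measurable (Function.uncurry Φ))
    (hpush : ∀ t ∈ Icc (0:ℝ) T, ∀ S : Set X, MeasurableSet S →
      𝔪 (Φ t ⁻¹' S) ≤ ENNReal.ofReal L * 𝔪 S)
    (β : ℝ → X → ℝ≥0∞) (hβm : Measurable (Function.uncurry β))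
    (hβint : ∫⁻ t in Icc (0:ℝ) T, (∫⁻ x, β t x ^ p ∂𝔪) ^ (1/p) < ⊤)
    (hAC : ∀ᵐ x ∂𝔪, ∃ v : ℝ → ℝ, IntervalIntegrable v volume 0 T ∧
      (∀ t ∈ Icc (0:ℝ) T,
        infDist (Φ t x) A = infDist x A + ∫ r in (0:ℝ)..t, v r) ∧
      (∀ᵐ t ∂(volume.restrict (Icc (0:ℝ) T)),
        ENNReal.ofReal |v t| ≤ β t (Φ t x)))
    (B : Set X) (hB : MeasurableSet B) (r₀ : ℝ) (hr₀ : 0 < r₀)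
    (hfin : ∫⁻ z in B ∩ {z | infDist z A ≤ r₀},
      ((ENNReal.ofReal (infDist z A))⁻¹) ^ (p/(p-1)) ∂𝔪 < ⊤) :
    ∀ᵐ x ∂𝔪,
      (r₀ ≤ infDist x A ∧ ∀ t ∈ Icc (0:ℝ) T, Φ t x ∈ B) →
        (∃ c : ℝ, 0 < c ∧ ∀ t ∈ Icc (0:ℝ) T, c ≤ infDist (Φ t x) A) ∧
          ∀ t ∈ Icc (0:ℝ) T, Φ t x ∉ A := by
  have hpq : p.HolderConjugate (p / (p - 1)) := .conjExponent hp
  have hq : 0 < p / (p - 1) := hpq.symm.pos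
  set S := B ∩ {z | infDist z A ≤ r₀}
  have hS : MeasurableSet S := hB.inter (measurableSet_le measurable_infDist measurable_const)
  have hSfin : 𝔪 S ≠ ⊤ :=
    measure_ne_top_of_setLIntegral_inv_rpow_ne_top hS hr₀ hq (fun z hz => hz.2) hfin.ne
  have hH := measurable_invInfDistOn (A := A) hS
  have hgood := ae_forall_rat_lintegral_comp_lt_top 𝔪 hΦm measurableSet_Icc ofReal_ne_top hpush
    (g := fun t z => β t z * invInfDistOn A S z) (hβm.mul (hH.comp measurable_snd))
    (setLIntegral_lintegral_mul_lt_top hpq (fun t => hβm.of_uncurry_left.aemeasurable)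
      hH.aemeasurable ((lintegral_invInfDistOn_rpow 𝔪 hS hq).trans_ne hfin.ne) hβint) hS hSfin
  filter_upwards [hAC, hgood] with x ⟨v, hv, hfv, hvβ⟩ hxG ⟨hx₀, hxB⟩
  obtain ⟨c, hc, hcf⟩ :=
    exists_pos_forall_le_infDist hΦm.of_uncurry_right hxB hr₀ hx₀ hv hfv hvβ hxG
  exact ⟨⟨c, hc, hcf⟩, fun t ht htA => (hc.trans_le (hcf t ht)).ne' (infDist_zero_of_mem htA)⟩

/-- **Flows with bounded compressibility avoid thin closed sets** (Proposition 4.5 of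
the paper, abstract form).  Let `(X, d)` be a metric space with a Borel measure `𝔪`,
`A` a nonempty closed set and `u(z) := dist(z, A)`.  Fix `T > 0`, `L ≥ 1`,
`p ∈ (1, ∞)`, `p' := p/(p-1)`.  Let `Φ` be a jointly measurable flow map with
`Φ₀ = id` and `(Φ_t)_# 𝔪 ≤ L 𝔪` for `t ∈ [0, T]`, and let `β ≥ 0` be measurable with
`∫₀ᵀ ‖β_t‖_{L^p} dt < ∞`.  Assume that for `𝔪`-a.e. `x` the map `t ↦ u(Φ_t(x))` is
absolutely continuous on `[0, T]` with `|d/dt u(Φ_t(x))| ≤ β_t(Φ_t(x))` a.e.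
(encoded here via the integral representation by an integrable a.e. derivative `v`).
If `B` is Borel, `r₀ > 0`, and `∫_{B ∩ {u ≤ r₀}} u^{-p'} d𝔪 < ∞` (with `u^{-p'} = ∞`
on `{u = 0}`), then for `𝔪`-a.e. `x` with `u(x) ≥ r₀` and `Φ_t(x) ∈ B` for all
`t ∈ [0, T]`, the trajectory stays quantitatively away from `A`:
`inf_{t ∈ [0,T]} u(Φ_t(x)) > 0`, and in particular `Φ_t(x) ∉ A` for every `t`. -/
theorem flow_avoids_thin_closed_set
    {X : Type*} [MetricSpace X] [MeasurableSpace X] [BorelSpace X]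
    (𝔪 : Measure X)
    (A : Set X) (hA : A.Nonempty) (hAc : IsClosed A)
    (T L p : ℝ) (hT : 0 < T) (hL : 1 ≤ L) (hp : 1 < p)
    (Φ : ℝ → X → X) (hΦm : Measurable (Function.uncurry Φ))
    (hΦ0 : ∀ x, Φ 0 x = x)
    (hpush : ∀ t ∈ Icc (0:ℝ) T, ∀ S : Set X, MeasurableSet S →
      𝔪 (Φ t ⁻¹' S) ≤ ENNReal.ofReal L * 𝔪 S)
    (β : ℝ → X → ℝ≥0∞) (hβm : Measurable (Function.uncurry β))
    (hβint : ∫⁻ t in Icc (0:ℝ) T, (∫⁻ x, β t x ^ p ∂𝔪) ^ (1/p) < ⊤)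
    (hAC : ∀ᵐ x ∂𝔪, ∃ v : ℝ → ℝ, IntervalIntegrable v volume 0 T ∧
      (∀ t ∈ Icc (0:ℝ) T,
        infDist (Φ t x) A = infDist x A + ∫ r in (0:ℝ)..t, v r) ∧
      (∀ᵐ t ∂(volume.restrict (Icc (0:ℝ) T)),
        ENNReal.ofReal |v t| ≤ β t (Φ t x)))
    (B : Set X) (hB : MeasurableSet B) (r₀ : ℝ) (hr₀ : 0 < r₀)
    (hfin : ∫⁻ z in B ∩ {z | infDist z A ≤ r₀},
      ((ENNReal.ofReal (infDist z A))⁻¹) ^ (p/(p-1)) ∂𝔪 < ⊤) :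
    ∀ᵐ x ∂𝔪,
      (r₀ ≤ infDist x A ∧ ∀ t ∈ Icc (0:ℝ) T, Φ t x ∈ B) →
        (∃ c : ℝ, 0 < c ∧ ∀ t ∈ Icc (0:ℝ) T, c ≤ infDist (Φ t x) A) ∧
          ∀ t ∈ Icc (0:ℝ) T, Φ t x ∉ A :=
  flow_avoids_thin_closed_set_general 𝔪 A T L p hp Φ hΦm hpush β hβm hβint hAC B hB r₀ hr₀ hfin
end

section
/- Let n ≥ 1, let F : ℝⁿ → ℝⁿ be differentiable at a point x ∈ ℝⁿ with differential DF(x), and let E ⊆ ℝⁿ be a Lebesgue-measurable set with x ∈ E having Lebesgue density 1 at x, i.e. |E ∩ B_r(x)| / |B_r(x)| → 1 as r → 0. Then limsup_{y ∈ E, y → x} ‖F(y) − F(x)‖ / ‖y − x‖ = ‖DF(x)‖ (the operator norm of DF(x)), and liminf_{y ∈ E, y → x} ‖F(y) − F(x)‖ / ‖y − x‖ = inf_{‖v‖ = 1} ‖DF(x) v‖, where ‖·‖ denotes the Euclidean norm on ℝⁿ. -/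
open MeasureTheory Set ENNReal Filter Metric
open Topology

/-!
Up to an `o(1)` error coming from differentiability, the slope `‖F y - F x‖ / ‖y - x‖` equals
`‖DF(x) (y - x)‖ / ‖y - x‖`, which depends only on the direction of `y - x` and lies between
the minimum and the maximum `‖DF(x)‖` of `‖DF(x) v‖` over the unit sphere. A set of density one
at `x` meets every cone `x + ℝ₊ • B(v, ρ)` arbitrarily close to `x`, since otherwise that cone
would remove a fixed proportion of every small ball around `x`. Hence every unit direction `v`,
in particular a maximiser and a minimiser of `‖DF(x) v‖`, is a cluster direction of `S` at `x`,
and both bounds are attained as cluster values of the slope.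
-/

section LimsupOfClusterPt

variable {ι β : Type*} [ConditionallyCompleteLinearOrder β] [TopologicalSpace β] [OrderTopology β]
  [DenselyOrdered β] [NoMinOrder β] [NoMaxOrder β] {l : Filter ι} {f : ι → β} {a : β}

theorem limsup_eq_of_mapClusterPt (hf : ∀ b, a < b → ∀ᶠ i in l, f i ≤ b)
    (ha : MapClusterPt a l f) : limsup f l = a := by
  obtain ⟨c, hc⟩ := exists_lt a
  obtain ⟨b, hb⟩ := exists_gt a
  have hcobdd : IsCoboundedUnder (· ≤ ·) l f :=
    .of_frequently_ge ((ha.frequently (Ioi_mem_nhds hc)).mono fun _ => le_of_lt)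
  have hbdd : IsBoundedUnder (· ≤ ·) l f := ⟨b, hf b hb⟩
  refine le_antisymm (le_of_forall_gt_imp_ge_of_dense fun b hb => limsup_le_of_le hcobdd (hf b hb))
    (le_of_forall_lt_imp_le_of_dense fun c hc => ?_)
  exact le_limsup_of_frequently_le (ha.frequently (Ici_mem_nhds hc)) hbdd

theorem liminf_eq_of_mapClusterPt (hf : ∀ b, b < a → ∀ᶠ i in l, b ≤ f i)
    (ha : MapClusterPt a l f) : liminf f l = a :=
  limsup_eq_of_mapClusterPt (β := βᵒᵈ) hf ha

end LimsupOfClusterPt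

theorem MapClusterPt.of_tendsto_sub {ι G : Type*} [TopologicalSpace G] [AddCommGroup G]
    [IsTopologicalAddGroup G] {l : Filter ι} {f g : ι → G} {a : G} (ha : MapClusterPt a l g)
    (hfg : Tendsto (fun i => f i - g i) l (𝓝 0)) : MapClusterPt a l f := by
  rw [mapClusterPt_iff_frequently] at ha ⊢
  intro s hs
  have hadd : ∀ᶠ p in 𝓝 a ×ˢ 𝓝 0, p.1 + p.2 ∈ s := by
    rw [← nhds_prod_eq]
    exact tendsto_add.eventually (by simpa using hs)
  obtain ⟨U, hU, V, hV, hUV⟩ := mem_prod_iff.1 hadd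
  refine ((ha U hU).and_eventually (hfg hV)).mono fun i ⟨hgi, hfgi⟩ => ?_
  simpa using hUV (mk_mem_prod hgi hfgi)

section Real

variable {ι : Type*} {l : Filter ι} {f g : ι → ℝ} {a : ℝ}

theorem limsup_eq_of_tendsto_sub (hfg : Tendsto (fun i => f i - g i) l (𝓝 0))
    (hg : ∀ᶠ i in l, g i ≤ a) (ha : MapClusterPt a l g) : limsup f l = a := by
  refine limsup_eq_of_mapClusterPt (fun b hb => ?_) (ha.of_tendsto_sub hfg)
  filter_upwards [hg, (tendsto_order.1 hfg).2 _ (sub_pos.2 hb)] with i hgi hfgi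
  linarith

theorem liminf_eq_of_tendsto_sub (hfg : Tendsto (fun i => f i - g i) l (𝓝 0))
    (hg : ∀ᶠ i in l, a ≤ g i) (ha : MapClusterPt a l g) : liminf f l = a := by
  refine liminf_eq_of_mapClusterPt (fun b hb => ?_) (ha.of_tendsto_sub hfg)
  filter_upwards [hg, (tendsto_order.1 hfg).1 _ (sub_neg.2 hb)] with i hgi hfgi
  linarith

end Real

theorem HasFDerivAt.tendsto_norm_sub_div_sub_norm_apply_div {𝕜 E F : Type*}
    [NontriviallyNormedField 𝕜] [NormedAddCommGroup E] [NormedSpace 𝕜 E]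
    [NormedAddCommGroup F] [NormedSpace 𝕜 F] {f : E → F} {f' : E →L[𝕜] F} {x : E}
    (hf : HasFDerivAt f f' x) :
    Tendsto (fun y => ‖f y - f x‖ / ‖y - x‖ - ‖f' (y - x)‖ / ‖y - x‖) (𝓝 x) (𝓝 0) := by
  refine squeeze_zero_norm (fun y => ?_) (hasFDerivAt_iff_tendsto.1 hf)
  rw [← sub_div, norm_div, norm_norm, Real.norm_eq_abs, div_eq_inv_mul]
  exact mul_le_mul_of_nonneg_left (abs_norm_sub_norm_le _ _) (inv_nonneg.2 (norm_nonneg _))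

section SphereExtrema

variable {E F : Type*} [NormedAddCommGroup E] [NormedSpace ℝ E] [ProperSpace E] [Nontrivial E]
  [NormedAddCommGroup F] [NormedSpace ℝ F] (f : E →L[ℝ] F)

theorem ContinuousLinearMap.exists_mem_sphere_norm_apply_eq_opNorm :
    ∃ v ∈ sphere (0 : E) 1, ‖f v‖ = ‖f‖ := by
  have hK := (isCompact_sphere (0 : E) 1).image (continuous_norm.comp f.continuous)
  obtain ⟨v, hv, hfv⟩ := hK.sSup_mem ((NormedSpace.sphere_nonempty.2 zero_le_one).image _)
  exact ⟨v, hv, hfv.trans f.sSup_sphere_eq_norm⟩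

theorem ContinuousLinearMap.exists_mem_sphere_norm_apply_eq_iInf :
    ∃ v ∈ sphere (0 : E) 1, ‖f v‖ = ⨅ u : sphere (0 : E) 1, ‖f u‖ := by
  have hK := (isCompact_sphere (0 : E) 1).image (continuous_norm.comp f.continuous)
  obtain ⟨v, hv, hfv⟩ := hK.sInf_mem ((NormedSpace.sphere_nonempty.2 zero_le_one).image _)
  exact ⟨v, hv, hfv.trans sInf_image'⟩

end SphereExtrema

theorem ContinuousLinearMap.iInf_sphere_le_ratio {E F : Type*} [NormedAddCommGroup E]
    [NormedSpace ℝ E] [NormedAddCommGroup F] [NormedSpace ℝ F] (f : E →L[ℝ] F) {u : E}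
    (hu : u ≠ 0) : ⨅ v : sphere (0 : E) 1, ‖f v‖ ≤ ‖f u‖ / ‖u‖ := by
  have hmem : ‖u‖⁻¹ • u ∈ sphere (0 : E) 1 := by simp [norm_smul, hu]
  refine (ciInf_le ⟨0, ?_⟩ ⟨_, hmem⟩).trans_eq ?_
  · rintro _ ⟨v, rfl⟩
    positivity
  · simp [norm_smul, div_eq_inv_mul]

section DensityOne

variable {E : Type*} [NormedAddCommGroup E] [NormedSpace ℝ E] [MeasurableSpace E] [BorelSpace E]
  [FiniteDimensional ℝ E] (μ : Measure E) [μ.IsAddHaarMeasure]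

theorem MeasureTheory.Measure.addHaar_closedBall_ae_eq_ball [Nontrivial E] (x : E) (r : ℝ) :
    closedBall x r =ᵐ[μ] ball x r :=
  (ae_eq_of_subset_of_measure_ge ball_subset_closedBall
    (μ.addHaar_closedBall_eq_addHaar_ball x r).le measurableSet_ball.nullMeasurableSet
    measure_closedBall_lt_top.ne).symm

theorem tendsto_measure_inter_closedBall_div_of_ball [Nontrivial E] {S : Set E} {x : E}
    (hS : Tendsto (fun r => μ (S ∩ ball x r) / μ (ball x r)) (𝓝[>] 0) (𝓝 1)) :
    Tendsto (fun r => μ (S ∩ closedBall x r) / μ (closedBall x r)) (𝓝[>] 0) (𝓝 1) := by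
  refine hS.congr fun r => ?_
  rw [measure_congr ((ae_eq_refl S).inter (μ.addHaar_closedBall_ae_eq_ball x r)),
    μ.addHaar_closedBall_eq_addHaar_ball]

theorem mapClusterPt_comp_sub_of_density_one {X : Type*} [TopologicalSpace X] {S : Set E}
    {x v : E} (hS : Tendsto (fun r => μ (S ∩ ball x r) / μ (ball x r)) (𝓝[>] 0) (𝓝 1))
    (hv : v ≠ 0) {φ : E → X} (hφv : ContinuousAt φ v) (hφ : ∀ c : ℝ, 0 < c → ∀ u, φ (c • u) = φ u) :
    MapClusterPt (φ v) (𝓝[S \ {x}] x) (fun y => φ (y - x)) := by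
  have : Nontrivial E := ⟨⟨v, 0, hv⟩⟩
  have hv' : 0 < ‖v‖ := norm_pos_iff.2 hv
  rw [mapClusterPt_iff_frequently]
  intro s hs
  obtain ⟨ρ, hρ, hρs⟩ := Metric.mem_nhds_iff.1 (hφv hs)
  -- capping the radius at `‖v‖` keeps the cone `ℝ₊ • ball v ρ'` away from `0`, so `y ≠ x`
  set ρ' := min ρ ‖v‖
  have hρ' : 0 < ρ' := lt_min hρ hv'
  rw [Filter.frequently_iff]
  intro U hU
  obtain ⟨ε, hε, hεU⟩ := Metric.mem_nhdsWithin_iff.1 hU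
  have hne := Measure.eventually_nonempty_inter_smul_of_density_one μ S x
    (tendsto_measure_inter_closedBall_div_of_ball μ hS) (ball v ρ') measurableSet_ball
    (measure_ball_pos μ v hρ').ne'
  obtain ⟨r, ⟨y, hyS, hy⟩, hr0, hrε⟩ :=
    (hne.and (Ioo_mem_nhdsGT (show 0 < ε / (2 * ‖v‖) by positivity))).exists
  rw [singleton_add] at hy
  obtain ⟨_, ⟨w, hw, rfl⟩, rfl⟩ := hy
  have hwv : ‖w - v‖ < ρ' := mem_ball_iff_norm.1 hw
  have hw0 : 0 < ‖w‖ := by linarith [norm_sub_norm_le v w, norm_sub_rev v w, min_le_right ρ ‖v‖]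
  have hw2 : ‖w‖ < 2 * ‖v‖ := by linarith [norm_le_norm_add_norm_sub' w v, min_le_right ρ ‖v‖]
  refine ⟨x + r • w, hεU ⟨?_, hyS, ?_⟩, ?_⟩
  · rw [mem_ball, dist_eq_norm, add_sub_cancel_left, norm_smul, Real.norm_eq_abs, abs_of_pos hr0]
    calc r * ‖w‖ < ε / (2 * ‖v‖) * (2 * ‖v‖) := mul_lt_mul'' hrε hw2 hr0.le hw0.le
      _ = ε := div_mul_cancel₀ ε (by positivity)
  · simpa [hr0.ne'] using norm_pos_iff.1 hw0
  · simpa [hφ r hr0] using hρs (ball_subset_ball (min_le_left ρ ‖v‖) hw)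

theorem ContinuousLinearMap.mapClusterPt_norm_apply_div_norm_of_density_one {F : Type*}
    [NormedAddCommGroup F] [NormedSpace ℝ F] (f : E →L[ℝ] F) {S : Set E} {x v : E}
    (hS : Tendsto (fun r => μ (S ∩ ball x r) / μ (ball x r)) (𝓝[>] 0) (𝓝 1))
    (hv : v ∈ sphere (0 : E) 1) :
    MapClusterPt ‖f v‖ (𝓝[S \ {x}] x) fun y => ‖f (y - x)‖ / ‖y - x‖ := by
  rw [mem_sphere_zero_iff_norm] at hv
  have hv0 : v ≠ 0 := ne_zero_of_norm_ne_zero (hv.symm ▸ one_ne_zero)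
  have := mapClusterPt_comp_sub_of_density_one μ hS hv0 (φ := fun u => ‖f u‖ / ‖u‖)
    ((by fun_prop : Continuous fun u => ‖f u‖).continuousAt.div continuous_norm.continuousAt
      (norm_ne_zero_iff.2 hv0))
    fun c hc u => by
      simp only [map_smul, norm_smul, Real.norm_eq_abs, abs_of_pos hc, mul_div_mul_left _ _ hc.ne']
  rwa [hv, div_one] at this

end DensityOne

theorem approximate_slopes_of_differentiable_map_general
    (n : ℕ) (hn : 1 ≤ n)
    (F : EuclideanSpace ℝ (Fin n) → EuclideanSpace ℝ (Fin n))
    (x : EuclideanSpace ℝ (Fin n))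
    (Df : EuclideanSpace ℝ (Fin n) →L[ℝ] EuclideanSpace ℝ (Fin n))
    (hF : HasFDerivAt F Df x)
    (S : Set (EuclideanSpace ℝ (Fin n)))
    (hdens : Tendsto (fun r : ℝ => volume (S ∩ ball x r) / volume (ball x r))
      (nhdsWithin 0 (Ioi 0)) (nhds 1)) :
    limsup (fun y => ‖F y - F x‖ / ‖y - x‖) (nhdsWithin x (S \ {x})) = ‖Df‖
      ∧ liminf (fun y => ‖F y - F x‖ / ‖y - x‖) (nhdsWithin x (S \ {x}))
          = ⨅ v : sphere (0 : EuclideanSpace ℝ (Fin n)) 1, ‖Df v‖ := by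
  have : Nontrivial (EuclideanSpace ℝ (Fin n)) :=
    Module.nontrivial_of_finrank_pos (R := ℝ) (by rw [finrank_euclideanSpace_fin]; omega)
  have hslope := hF.tendsto_norm_sub_div_sub_norm_apply_div.mono_left
    (nhdsWithin_le_nhds (s := S \ {x}))
  have hcluster := fun v (hv : v ∈ sphere (0 : EuclideanSpace ℝ (Fin n)) 1) =>
    Df.mapClusterPt_norm_apply_div_norm_of_density_one volume hdens hv
  obtain ⟨v₀, hv₀, hDv₀⟩ := Df.exists_mem_sphere_norm_apply_eq_opNorm
  obtain ⟨v₁, hv₁, hDv₁⟩ := Df.exists_mem_sphere_norm_apply_eq_iInf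
  refine ⟨limsup_eq_of_tendsto_sub hslope (.of_forall fun y => Df.ratio_le_opNorm _)
    (hDv₀ ▸ hcluster v₀ hv₀), liminf_eq_of_tendsto_sub hslope ?_ (hDv₁ ▸ hcluster v₁ hv₁)⟩
  filter_upwards [self_mem_nhdsWithin] with y hy
  exact Df.iInf_sphere_le_ratio (sub_ne_zero.2 hy.2)

/-- **Approximate slopes of a differentiable map on Euclidean space** (Remark 1.5 of
the paper).  Let `n ≥ 1`, let `F : ℝⁿ → ℝⁿ` be differentiable at `x` with
differential `DF(x)`, and let `S` be a Lebesgue-measurable set containing `x` with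
Lebesgue density `1` at `x`.  Then the limsup of `‖F(y) - F(x)‖ / ‖y - x‖` as
`y → x` within `S \ {x}` equals the operator norm `‖DF(x)‖`, and the liminf equals
`inf_{‖v‖ = 1} ‖DF(x) v‖`. -/
theorem approximate_slopes_of_differentiable_map
    (n : ℕ) (hn : 1 ≤ n)
    (F : EuclideanSpace ℝ (Fin n) → EuclideanSpace ℝ (Fin n))
    (x : EuclideanSpace ℝ (Fin n))
    (Df : EuclideanSpace ℝ (Fin n) →L[ℝ] EuclideanSpace ℝ (Fin n))
    (hF : HasFDerivAt F Df x)
    (S : Set (EuclideanSpace ℝ (Fin n))) (hS : MeasurableSet S) (hxS : x ∈ S)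
    (hdens : Tendsto (fun r : ℝ => volume (S ∩ ball x r) / volume (ball x r))
      (nhdsWithin 0 (Ioi 0)) (nhds 1)) :
    limsup (fun y => ‖F y - F x‖ / ‖y - x‖) (nhdsWithin x (S \ {x})) = ‖Df‖
      ∧ liminf (fun y => ‖F y - F x‖ / ‖y - x‖) (nhdsWithin x (S \ {x}))
          = ⨅ v : sphere (0 : EuclideanSpace ℝ (Fin n)) 1, ‖Df v‖ :=
  approximate_slopes_of_differentiable_map_general n hn F x Df hF S hdens
end
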